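/- Let X ∼ N(0, σ²) with σ > 0 and c > 0. Then E[ (max(|X| − c, 0))² ] = 2(σ² + c²) Q(c/σ) − 2cσ/√(2π) · e^{−c²/(2σ²)}, where Q(t) = ∫_t^∞ (1/√(2π)) e^{−u²/2} du. -/

import Mathlib

open MeasureTheory

/-- The standard normal density. -/
noncomputable def stdGaussianPDF (u : ℝ) : ℝ :=
  (Real.sqrt (2 * Real.pi))⁻¹ * Real.exp (-u^2 / 2)

/-- The Gaussian tail function `Q(t) = ∫_t^∞ φ(u) du`. -/
noncomputable def gaussQ (t : ℝ) : ℝ := ∫ u in Set.Ioi t, stdGaussianPDF u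

/-- The `N(0,σ²)` density. -/
noncomputable def gaussPDF (σ x : ℝ) : ℝ :=
  (σ * Real.sqrt (2 * Real.pi))⁻¹ * Real.exp (-x^2 / (2*σ^2))

/-!
By symmetry the left side is `2 ∫_c^∞ (x - c)² φ_σ(x) dx`. Since `φ_σ' = -(x/σ²) φ_σ`, the function
`F(x) = σ² (x - 2c) φ_σ(x)` has `F' = (σ² - x (x - 2c)) φ_σ`, hence `(x - c)² φ_σ = (σ² + c²) φ_σ - F'`.
One integration by parts gives `∫_c^∞ (x - c)² φ_σ = (σ² + c²) Q(c/σ) - c σ² φ_σ(c)`.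
-/

open Real Set Filter Topology

section GaussPDF

variable {σ : ℝ}

lemma gaussPDF_eq_mul_exp_neg_mul_sq (σ x : ℝ) :
    gaussPDF σ x = (σ * √(2 * π))⁻¹ * exp (-(2 * σ ^ 2)⁻¹ * x ^ 2) := by
  rw [gaussPDF, neg_div, div_eq_inv_mul, neg_mul]

lemma gaussPDF_abs (σ x : ℝ) : gaussPDF σ |x| = gaussPDF σ x := by
  simp only [gaussPDF, sq_abs]

lemma gaussPDF_eq_inv_mul_stdGaussianPDF (σ x : ℝ) :
    gaussPDF σ x = σ⁻¹ * stdGaussianPDF (σ⁻¹ * x) := by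
  rw [gaussPDF, stdGaussianPDF, mul_inv, mul_assoc]
  congr 3
  ring

lemma integrable_pow_mul_gaussPDF (hσ : σ ≠ 0) (n : ℕ) :
    Integrable (fun x ↦ x ^ n * gaussPDF σ x) := by
  have hb : 0 < (2 * σ ^ 2)⁻¹ := by positivity
  have h := integrable_rpow_mul_exp_neg_mul_sq hb (s := n) (by linarith [n.cast_nonneg (α := ℝ)])
  simp only [rpow_natCast] at h
  refine (h.const_mul (σ * √(2 * π))⁻¹).congr (Eventually.of_forall fun x ↦ ?_)
  simp only [gaussPDF_eq_mul_exp_neg_mul_sq]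
  ring

lemma hasDerivAt_gaussPDF (σ x : ℝ) :
    HasDerivAt (gaussPDF σ) (-(x / σ ^ 2) * gaussPDF σ x) x := by
  refine (((hasDerivAt_pow 2 x).neg.div_const (2 * σ ^ 2)).exp.const_mul
    (σ * √(2 * π))⁻¹).congr_deriv ?_
  simp only [gaussPDF, Pi.neg_apply, neg_div]
  ring

lemma hasDerivAt_mul_sub_mul_gaussPDF (hσ : σ ≠ 0) (a x : ℝ) :
    HasDerivAt (fun y ↦ σ ^ 2 * ((y - a) * gaussPDF σ y))
      ((σ ^ 2 - x * (x - a)) * gaussPDF σ x) x := by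
  refine ((((hasDerivAt_id x).sub_const a).mul (hasDerivAt_gaussPDF σ x)).const_mul
    (σ ^ 2)).congr_deriv ?_
  simp only [id_eq]
  field_simp
  ring

lemma integral_Ioi_gaussPDF (hσ : 0 < σ) (c : ℝ) :
    ∫ x in Ioi c, gaussPDF σ x = gaussQ (c / σ) := by
  simp_rw [gaussPDF_eq_inv_mul_stdGaussianPDF σ]
  rw [integral_const_mul, integral_comp_mul_left_Ioi _ _ (inv_pos.mpr hσ), smul_eq_mul,
    inv_inv, ← mul_assoc, inv_mul_cancel₀ hσ.ne', one_mul, inv_mul_eq_div, gaussQ]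

lemma integral_Ioi_sub_sq_mul_gaussPDF (hσ : σ ≠ 0) (c : ℝ) :
    ∫ x in Ioi c, (x - c) ^ 2 * gaussPDF σ x
      = (σ ^ 2 + c ^ 2) * (∫ x in Ioi c, gaussPDF σ x) - c * σ ^ 2 * gaussPDF σ c := by
  set F : ℝ → ℝ := fun y ↦ σ ^ 2 * ((y - 2 * c) * gaussPDF σ y)
  set F' : ℝ → ℝ := fun y ↦ (σ ^ 2 - y * (y - 2 * c)) * gaussPDF σ y
  have hF : ∀ x, HasDerivAt F (F' x) x := hasDerivAt_mul_sub_mul_gaussPDF hσ (2 * c)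
  have hI : ∀ n, Integrable (fun x ↦ x ^ n * gaussPDF σ x) := integrable_pow_mul_gaussPDF hσ
  have hF_int : Integrable F :=
    (((hI 1).sub ((hI 0).const_mul (2 * c))).const_mul (σ ^ 2)).congr
      (Eventually.of_forall fun x ↦ by simp only [F, Pi.sub_apply]; ring)
  have hF'_int : Integrable F' :=
    ((((hI 0).const_mul (σ ^ 2)).sub (hI 2)).add ((hI 1).const_mul (2 * c))).congr
      (Eventually.of_forall fun x ↦ by simp only [F', Pi.add_apply, Pi.sub_apply]; ring)
  have hF_lim : Tendsto F atTop (𝓝 0) :=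
    tendsto_zero_of_hasDerivAt_of_integrableOn_Ioi (a := 0) (fun x _ ↦ hF x)
      hF'_int.integrableOn hF_int.integrableOn
  have hFTC : ∫ x in Ioi c, F' x = c * σ ^ 2 * gaussPDF σ c := by
    rw [integral_Ioi_of_hasDerivAt_of_tendsto' (fun x _ ↦ hF x) hF'_int.integrableOn hF_lim]
    simp only [F]
    ring
  have hsplit : ∀ x, (x - c) ^ 2 * gaussPDF σ x = (σ ^ 2 + c ^ 2) * gaussPDF σ x - F' x :=
    fun x ↦ by simp only [F']; ring
  simp_rw [hsplit]
  have hφ : Integrable (gaussPDF σ) := by simpa using hI 0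
  rw [integral_sub (hφ.const_mul _).integrableOn hF'_int.integrableOn, integral_const_mul, hFTC]

end GaussPDF

lemma setIntegral_Ioi_zero_max_sub_sq_mul {c : ℝ} (hc : 0 ≤ c) (f : ℝ → ℝ) :
    ∫ x in Ioi 0, max (x - c) 0 ^ 2 * f x = ∫ x in Ioi c, (x - c) ^ 2 * f x := by
  rw [setIntegral_eq_of_subset_of_forall_sdiff_eq_zero measurableSet_Ioi
    (Ioi_subset_Ioi hc) fun x hx ↦ by
      rw [max_eq_right (sub_nonpos.mpr (not_lt.mp hx.2)), sq, zero_mul, zero_mul]]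
  exact setIntegral_congr_fun measurableSet_Ioi fun x hx ↦ by
    rw [max_eq_left (sub_nonneg.mpr (le_of_lt hx))]

/-- Second moment of a soft-thresholded centered Gaussian: for `X ∼ N(0,σ²)` and `c > 0`,
`E[(max(|X| − c, 0))²] = 2(σ² + c²) Q(c/σ) − (2cσ/√(2π)) e^{−c²/(2σ²)}`. -/
theorem stmt_10 (σ c : ℝ) (hσ : 0 < σ) (hc : 0 < c) :
    (∫ x : ℝ, (max (|x| - c) 0)^2 * gaussPDF σ x)
      = 2*(σ^2 + c^2) * gaussQ (c/σ)
        - 2*c*σ/Real.sqrt (2*Real.pi) * Real.exp (-c^2/(2*σ^2)) := by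
  have hsymm : ∫ x : ℝ, max (|x| - c) 0 ^ 2 * gaussPDF σ x
      = 2 * ∫ x in Ioi 0, max (x - c) 0 ^ 2 * gaussPDF σ x := by
    rw [← integral_comp_abs (f := fun t ↦ max (t - c) 0 ^ 2 * gaussPDF σ t)]
    simp only [gaussPDF_abs]
  rw [hsymm, setIntegral_Ioi_zero_max_sub_sq_mul hc.le, integral_Ioi_sub_sq_mul_gaussPDF hσ.ne',
    integral_Ioi_gaussPDF hσ, gaussPDF]
  field_simp
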